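/- For every nonnegative integer n: ∑_{k=0}^n C(n,k)^4 · {1 + 4(n−2k)H_k} = (−1)^n · C(2n,n), i.e. T_n^{(4)} = (−1)^n C(2n,n). -/

import Mathlib

/-!
Creative telescoping (Wilf–Zeilberger). The summand `F = summand` and the certificate
`G = certificate` satisfy, for every `k`,
`(n+1) F(n+1,k) + 2(2n+1) F(n,k) + c_n (n-2k) C(n,k)^4 = G(n,k+1) - G(n,k)`
with `c_n = 2(8n+3)/(n+1)`. Summing over `k` kills the right-hand side, and the extra term sums
to zero because it is antisymmetric under `k ↦ n-k`. So the sums `T n` satisfy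
`(n+1) T(n+1) = -2(2n+1) T n`, the recurrence of `(-1)^n C(2n,n)`.
-/

noncomputable def H (m : ℕ) : ℚ := ∑ j ∈ Finset.range m, (1 : ℚ) / (j + 1)

open Finset

lemma H_succ (k : ℕ) : H (k + 1) = H k + 1 / ((k : ℚ) + 1) := by
  simp [H, Finset.sum_range_succ]

section Binomial

variable {R : Type*} [CommRing R]

lemma Nat.cast_choose_succ_right_mul (n k : ℕ) :
    (n.choose (k + 1) : R) * (k + 1) = n.choose k * ((n : R) - k) := by
  rcases le_or_gt k n with hk | hk
  · have h := congrArg (Nat.cast : ℕ → R) (Nat.choose_succ_right_eq n k)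
    push_cast [Nat.cast_sub hk] at h
    exact h
  · simp [Nat.choose_eq_zero_of_lt hk, Nat.choose_eq_zero_of_lt (Nat.lt_succ_of_lt hk)]

lemma Nat.cast_choose_succ_mul (n k : ℕ) :
    ((n + 1).choose k : R) * ((n : R) + 1 - k) = n.choose k * ((n : R) + 1) := by
  have h := Nat.cast_choose_succ_right_mul (R := R) n k
  have h' := Nat.cast_choose_succ_right_mul (R := R) (n + 1) k
  rw [Nat.choose_succ_succ', Nat.cast_add] at h'
  push_cast at h'
  linear_combination h - h'

lemma sum_range_sub_two_mul_mul_choose (n : ℕ) (f : ℕ → R) :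
    ∑ k ∈ range (n + 1), ((n : R) - 2 * k) * f (n.choose k) = 0 := by
  have reflect : ∑ k ∈ range (n + 1), ((n : R) - k) * f (n.choose k) =
      ∑ k ∈ range (n + 1), (k : R) * f (n.choose k) := by
    rw [← sum_range_reflect]
    refine sum_congr rfl fun k hk => ?_
    have hk : k ≤ n := Nat.lt_succ_iff.mp (mem_range.mp hk)
    rw [Nat.add_sub_cancel, Nat.choose_symm hk, Nat.cast_sub hk, sub_sub_cancel]
  calc ∑ k ∈ range (n + 1), ((n : R) - 2 * k) * f (n.choose k)
      = ∑ k ∈ range (n + 1), ((n : R) - k) * f (n.choose k) -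
          ∑ k ∈ range (n + 1), (k : R) * f (n.choose k) := by
        rw [← sum_sub_distrib]; exact sum_congr rfl fun k _ => by ring
    _ = 0 := by rw [reflect, sub_self]

end Binomial

lemma eq_neg_one_pow_mul_centralBinom_of_recurrence {K : Type*} [Field K] [CharZero K]
    (u : ℕ → K) (h0 : u 0 = 1)
    (hrec : ∀ n : ℕ, ((n : K) + 1) * u (n + 1) + 2 * (2 * n + 1) * u n = 0) (n : ℕ) :
    u n = (-1) ^ n * n.centralBinom := by
  induction n with
  | zero => simp [h0]
  | succ n ih =>
    have hn : (n : K) + 1 ≠ 0 := by exact_mod_cast n.succ_ne_zero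
    have hc : ((n : K) + 1) * (n + 1).centralBinom = 2 * (2 * n + 1) * n.centralBinom := by
      exact_mod_cast n.succ_mul_centralBinom_succ
    apply mul_left_cancel₀ hn
    linear_combination hrec n + (-1) ^ n * hc - 2 * (2 * (n : K) + 1) * ih

namespace PauleSchneider

noncomputable def summand (n k : ℕ) : ℚ :=
  (n.choose k : ℚ) ^ 4 * (1 + 4 * ((n : ℚ) - 2 * k) * H k)

/-- The WZ certificate, written with `C(n+1,k)` rather than `C(n,k) / (n+1-k)` so that it has no
pole at `k = n + 1` and the telescoping identity holds for every `k`. -/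
noncomputable def certificate (n k : ℕ) : ℚ :=
  ((n + 1).choose k : ℚ) ^ 4 *
    ((k : ℚ) ^ 3 * (10 * k ^ 3 - 36 * (n + 1) * k ^ 2 + 45 * (n + 1) ^ 2 * k - 20 * (n + 1) ^ 3) /
        ((n : ℚ) + 1) ^ 5 +
      4 * (k : ℚ) ^ 4 * (2 * k ^ 2 - 6 * (n + 1) * k + 5 * (n + 1) ^ 2) / ((n : ℚ) + 1) ^ 4 * H k)

lemma summand_succ_eq (n k : ℕ) :
    ((n : ℚ) + 1) * summand (n + 1) k + 2 * (2 * n + 1) * summand n k +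
        2 * (8 * n + 3) / ((n : ℚ) + 1) * (((n : ℚ) - 2 * k) * (n.choose k : ℚ) ^ 4) =
      certificate n (k + 1) - certificate n k := by
  have hn : (n : ℚ) + 1 ≠ 0 := by positivity
  have hk : (k : ℚ) + 1 ≠ 0 := by positivity
  have hlow : (n.choose k : ℚ) = ((n + 1).choose k : ℚ) * ((n : ℚ) + 1 - k) / ((n : ℚ) + 1) := by
    rw [eq_div_iff hn, Nat.cast_choose_succ_mul]
  have hnext : ((n + 1).choose (k + 1) : ℚ) =
      ((n + 1).choose k : ℚ) * ((n : ℚ) + 1 - k) / ((k : ℚ) + 1) := by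
    rw [eq_div_iff hk, Nat.cast_choose_succ_right_mul]; push_cast; ring
  simp only [summand, certificate, hlow, hnext, H_succ]
  push_cast
  field_simp
  ring

lemma certificate_zero (n : ℕ) : certificate n 0 = 0 := by
  simp [certificate]

lemma certificate_eq_zero_of_lt {n k : ℕ} (hk : n + 1 < k) : certificate n k = 0 := by
  simp [certificate, Nat.choose_eq_zero_of_lt hk]

lemma summand_eq_zero_of_lt {n k : ℕ} (hk : n < k) : summand n k = 0 := by
  simp [summand, Nat.choose_eq_zero_of_lt hk]

lemma sum_summand_recurrence (n : ℕ) :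
    ((n : ℚ) + 1) * ∑ k ∈ range (n + 1 + 1), summand (n + 1) k +
      2 * (2 * n + 1) * ∑ k ∈ range (n + 1), summand n k = 0 := by
  have telescope := sum_congr rfl fun k (_ : k ∈ range (n + 2)) => summand_succ_eq n k
  rw [sum_range_sub (certificate n), certificate_zero,
    certificate_eq_zero_of_lt (Nat.lt_succ_self (n + 1)), sum_add_distrib, sum_add_distrib,
    ← mul_sum, ← mul_sum, ← mul_sum] at telescope
  rw [sum_range_succ (fun k => summand n k), summand_eq_zero_of_lt n.lt_succ_self,
    sum_range_succ (fun k => ((n : ℚ) - 2 * k) * (n.choose k : ℚ) ^ 4),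
    sum_range_sub_two_mul_mul_choose n (fun c => (c : ℚ) ^ 4), Nat.choose_succ_self] at telescope
  simpa using telescope

end PauleSchneider

theorem paule_schneider_four (n : ℕ) :
    ∑ k ∈ Finset.range (n + 1),
      ((n.choose k : ℚ))^(4 : ℕ) * (1 + (4) * ((n : ℚ) - 2*k) * H k) =
      (-1)^n * ((2*n).choose n : ℚ) := by
  have h := eq_neg_one_pow_mul_centralBinom_of_recurrence
    (fun n => ∑ k ∈ range (n + 1), PauleSchneider.summand n k)
    (by simp [PauleSchneider.summand, H]) PauleSchneider.sum_summand_recurrence n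
  simpa only [PauleSchneider.summand, Nat.centralBinom_eq_two_mul_choose] using h
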